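/- Let f: k³ → k³ be a bijective orthogonal linear map over a field k (i.e., f(α)·f(β) = α·β for all α, β). Then the map Δ_f on the Zorn vector matrix algebra over k given by Δ_f([[a,α],[β,b]]) = [[a, f(α)],[f(β), b]] is a k-algebra automorphism if and only if f preserves the cross product: f(α × β) = f(α) × f(β) for all α, β ∈ k³. -/

import Mathlib

/-- Zorn vector matrices `[[a, α], [β, b]]` over a field `k`. -/
@[ext]
structure Zorn (k : Type*) where
  a : k
  α : Fin 3 → k
  β : Fin 3 → k
  b : k

namespace Zorn

variable {k : Type*} [Field k]

/-- Dot product on `k³`. -/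
def dot (u v : Fin 3 → k) : k := u 0 * v 0 + u 1 * v 1 + u 2 * v 2

/-- Cross product on `k³`. -/
def cross (u v : Fin 3 → k) : Fin 3 → k :=
  ![u 1 * v 2 - u 2 * v 1, u 2 * v 0 - u 0 * v 2, u 0 * v 1 - u 1 * v 0]

/-- Zorn vector matrix multiplication. -/
instance : Mul (Zorn k) :=
  ⟨fun x y =>
    ⟨x.a * y.a + dot x.α y.β,
     fun i => x.a * y.α i + y.b * x.α i - cross x.β y.β i,
     fun i => y.a * x.β i + x.b * y.β i + cross x.α y.α i,
     dot x.β y.α + x.b * y.b⟩⟩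

instance : One (Zorn k) := ⟨⟨1, 0, 0, 1⟩⟩
instance : Zero (Zorn k) := ⟨⟨0, 0, 0, 0⟩⟩
instance : Add (Zorn k) := ⟨fun x y => ⟨x.a + y.a, x.α + y.α, x.β + y.β, x.b + y.b⟩⟩
instance : Neg (Zorn k) := ⟨fun x => ⟨-x.a, -x.α, -x.β, -x.b⟩⟩
instance : SMul k (Zorn k) := ⟨fun c x => ⟨c * x.a, c • x.α, c • x.β, c * x.b⟩⟩

/-- The norm (determinant) of a Zorn vector matrix. -/
def N (x : Zorn k) : k := x.a * x.b - dot x.α x.β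

/-- The bilinear form associated with the norm. -/
def polarN (x y : Zorn k) : k := N (x + y) - N x - N y

/-! `Δ_f` is clearly bijective, `k`-linear and unital. In a product the scalar entries only
involve dot products, which `f` preserves, and the vector entries are linear combinations of
`α, β` plus a cross product; so `Δ_f` is multiplicative as soon as `f` commutes with `×`.
Conversely, `[[0,0],[u,0]] · [[0,0],[v,0]] = [[0,-(u × v)],[0,0]]`, so multiplicativity
on such matrices is exactly compatibility of `f` with `×`. -/

@[simp] lemma mul_a (x y : Zorn k) : (x * y).a = x.a * y.a + dot x.α y.β := rfl

@[simp] lemma mul_α (x y : Zorn k) :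
    (x * y).α = x.a • y.α + y.b • x.α - cross x.β y.β := by
  funext i; simp [HMul.hMul, Mul.mul]

@[simp] lemma mul_β (x y : Zorn k) :
    (x * y).β = y.a • x.β + x.b • y.β + cross x.α y.α := by
  funext i; simp [HMul.hMul, Mul.mul]

@[simp] lemma mul_b (x y : Zorn k) : (x * y).b = dot x.β y.α + x.b * y.b := rfl

section diagMap

variable (f : (Fin 3 → k) →ₗ[k] (Fin 3 → k))

def diagMap (x : Zorn k) : Zorn k := ⟨x.a, f x.α, f x.β, x.b⟩

variable {f}

lemma diagMap_bijective (hf : Function.Bijective f) : Function.Bijective (diagMap f) := by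
  refine ⟨fun x y hxy => ?_, fun y => ?_⟩
  · simp only [diagMap, Zorn.mk.injEq] at hxy
    obtain ⟨ha, hα, hβ, hb⟩ := hxy
    exact Zorn.ext ha (hf.injective hα) (hf.injective hβ) hb
  · obtain ⟨u, hu⟩ := hf.surjective y.α
    obtain ⟨v, hv⟩ := hf.surjective y.β
    exact ⟨⟨y.a, u, v, y.b⟩, by simp [diagMap, hu, hv]⟩

variable (f)

lemma diagMap_add (x y : Zorn k) : diagMap f (x + y) = diagMap f x + diagMap f y :=
  Zorn.ext rfl (map_add f x.α y.α) (map_add f x.β y.β) rfl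

lemma diagMap_smul (c : k) (x : Zorn k) : diagMap f (c • x) = c • diagMap f x :=
  Zorn.ext rfl (map_smul f c x.α) (map_smul f c x.β) rfl

lemma diagMap_one : diagMap f 1 = 1 :=
  Zorn.ext rfl (map_zero f) (map_zero f) rfl

variable {f}

lemma diagMap_mul (hf_orth : ∀ u v, dot (f u) (f v) = dot u v)
    (hf_cross : ∀ u v, f (cross u v) = cross (f u) (f v)) (x y : Zorn k) :
    diagMap f (x * y) = diagMap f x * diagMap f y := by
  ext1 <;> simp [diagMap, hf_orth, hf_cross]

lemma map_cross_of_diagMap_mul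
    (hmul : ∀ x y : Zorn k, diagMap f (x * y) = diagMap f x * diagMap f y) (u v : Fin 3 → k) : f (cross u v) = cross (f u) (f v) := by
  have h := congrArg Zorn.α (hmul ⟨0, 0, u, 0⟩ ⟨0, 0, v, 0⟩)
  simpa [diagMap] using h

end diagMap

/-- For a bijective orthogonal linear map `f : k³ → k³`, the map
`Δ_f [[a,α],[β,b]] = [[a,f(α)],[f(β),b]]` is a `k`-algebra automorphism of the Zorn
algebra iff `f` preserves the cross product. -/
theorem diag_automorphism_iff (f : (Fin 3 → k) →ₗ[k] (Fin 3 → k))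
    (hf_bij : Function.Bijective f)
    (hf_orth : ∀ u v : Fin 3 → k, dot (f u) (f v) = dot u v) :
    (Function.Bijective (fun x : Zorn k => (⟨x.a, f x.α, f x.β, x.b⟩ : Zorn k)) ∧
     (∀ x y : Zorn k, (⟨(x + y).a, f (x + y).α, f (x + y).β, (x + y).b⟩ : Zorn k)
        = (⟨x.a, f x.α, f x.β, x.b⟩ : Zorn k) + ⟨y.a, f y.α, f y.β, y.b⟩) ∧
     (∀ (c : k) (x : Zorn k), (⟨(c • x).a, f (c • x).α, f (c • x).β, (c • x).b⟩ : Zorn k)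
        = c • (⟨x.a, f x.α, f x.β, x.b⟩ : Zorn k)) ∧
     (⟨(1 : Zorn k).a, f (1 : Zorn k).α, f (1 : Zorn k).β, (1 : Zorn k).b⟩ : Zorn k) = 1 ∧
     (∀ x y : Zorn k, (⟨(x * y).a, f (x * y).α, f (x * y).β, (x * y).b⟩ : Zorn k)
        = (⟨x.a, f x.α, f x.β, x.b⟩ : Zorn k) * ⟨y.a, f y.α, f y.β, y.b⟩))
    ↔ ∀ u v : Fin 3 → k, f (cross u v) = cross (f u) (f v) :=
  ⟨fun ⟨_, _, _, _, hmul⟩ => map_cross_of_diagMap_mul hmul,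
   fun hf_cross => ⟨diagMap_bijective hf_bij, diagMap_add f, diagMap_smul f, diagMap_one f,
     diagMap_mul hf_orth hf_cross⟩⟩

end Zorn
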